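/- Let G be a simple 6-regular graph. Then every multigraph in the Δ-YY equivalence class of G has all connections of size at most 2. -/

import Mathlib

open scoped Classical

noncomputable section

/-- A multigraph: a finite vertex type together with a symmetric multiplicity
function recording the size of the connection (set of parallel edges) between
any two vertices; there are no loops. -/
structure MG : Type 1 where
  V : Type
  fin : Fintype V
  mult : V → V → ℕ
  symm : ∀ u v, mult u v = mult v u
  loopless : ∀ v, mult v v = 0

namespace MG

/-- Two vertices are adjacent when their connection is non-empty. -/
def Adj (G : MG) (u v : G.V) : Prop := 0 < G.mult u v

/-- Connection size as a function on unordered pairs of vertices. -/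
def multS (G : MG) : Sym2 G.V → ℕ := Sym2.lift ⟨G.mult, G.symm⟩

/-- Number of vertices. -/
def order (G : MG) : ℕ := @Fintype.card G.V G.fin

/-- Degree of a vertex, counting edges with multiplicity. -/
def deg (G : MG) (v : G.V) : ℕ :=
  haveI := G.fin
  ∑ u, G.mult v u

/-- `G` is `k`-regular. -/
def Regular (G : MG) (k : ℕ) : Prop := ∀ v, G.deg v = k

/-- A simple graph: every connection has size at most 1. -/
def Simple (G : MG) : Prop := ∀ u v, G.mult u v ≤ 1

/-- Isomorphism of multigraphs. -/
def Iso (G H : MG) : Prop :=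
  ∃ e : G.V ≃ H.V, ∀ u v, H.mult (e u) (e v) = G.mult u v

/-- Indicator: is `{a,b}` one of the three pairs `{u,v}, {u,w}, {v,w}`? -/
def triCount {V : Type} (u v w a b : V) : ℕ :=
  if s(a, b) ∈ ({s(u, v), s(u, w), s(v, w)} : Set (Sym2 V)) then 1 else 0

lemma triCount_symm {V : Type} (u v w a b : V) :
    triCount u v w a b = triCount u v w b a := by
  unfold triCount
  have h : s(a, b) = s(b, a) := Sym2.eq_swap
  rw [h]

/-- `u, v, w` form a delta (triangle): pairwise distinct and pairwise adjacent. -/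
def IsDelta (G : MG) (u v w : G.V) : Prop :=
  u ≠ v ∧ u ≠ w ∧ v ≠ w ∧ G.Adj u v ∧ G.Adj u w ∧ G.Adj v w

/-- `x` is the centre of a wye with external vertices `u, v, w`: the edges
incident to `x` are exactly two parallel edges to each of `u, v, w`. -/
def IsWye (G : MG) (x u v w : G.V) : Prop :=
  u ≠ v ∧ u ≠ w ∧ v ≠ w ∧ x ≠ u ∧ x ≠ v ∧ x ≠ w ∧
    G.mult x u = 2 ∧ G.mult x v = 2 ∧ G.mult x w = 2 ∧
    ∀ y : G.V, y ≠ u → y ≠ v → y ≠ w → G.mult x y = 0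

/-- Multiplicity function of the result of a Δ-YY transformation on the
delta `u, v, w`; the new vertex `x` is `none`. -/
def deltaMult (G : MG) (u v w : G.V) : Option G.V → Option G.V → ℕ
  | none, none => 0
  | none, some b => if b = u ∨ b = v ∨ b = w then 2 else 0
  | some a, none => if a = u ∨ a = v ∨ a = w then 2 else 0
  | some a, some b => G.mult a b - triCount u v w a b

/-- The result of the Δ-YY transformation on the delta `u, v, w`: one edge of
each of the connections `uv`, `uw`, `vw` is removed, a new vertex (`none`) is
added, joined by two parallel edges to each of `u, v, w`. -/
def deltaYY (G : MG) (u v w : G.V) : MG where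
  V := Option G.V
  fin := by haveI := G.fin; infer_instance
  mult := G.deltaMult u v w
  symm := by
    rintro (_ | a) (_ | b)
    · rfl
    · rfl
    · rfl
    · show G.mult a b - triCount u v w a b = G.mult b a - triCount u v w b a
      rw [G.symm a b, triCount_symm]
  loopless := by
    rintro (_ | a)
    · rfl
    · show G.mult a a - triCount u v w a a = 0
      rw [G.loopless]
      exact Nat.zero_sub _

/-- The result of the YY-Δ transformation on a wye with centre `x` and external
vertices `u, v, w`: the vertex `x` is deleted together with all its incident
edges, and one new edge is added to each of the connections `uv`, `uw`, `vw`. -/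
def yyDelta (G : MG) (x u v w : G.V) : MG where
  V := {y : G.V // y ≠ x}
  fin := by haveI := G.fin; infer_instance
  mult a b := if a = b then 0 else G.mult a.1 b.1 + triCount u v w a.1 b.1
  symm := by
    intro a b
    try dsimp only
    rcases eq_or_ne a b with h | h
    · subst h; rfl
    · rw [if_neg h, if_neg h.symm, G.symm a.1 b.1, triCount_symm]
  loopless := fun a => if_pos rfl

/-- `G'` is obtained from `G` by a Δ-YY transformation. -/
def DeltaYYStep (G G' : MG) : Prop :=
  ∃ u v w : G.V, G.IsDelta u v w ∧ Iso (G.deltaYY u v w) G'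

/-- `G'` is obtained from `G` by a YY-Δ transformation. -/
def YYDeltaStep (G G' : MG) : Prop :=
  ∃ x u v w : G.V, G.IsWye x u v w ∧ Iso (G.yyDelta x u v w) G'

/-- `G'` is obtained from `G` by a Δ-YY operation (either a Δ-YY transformation
or a YY-Δ transformation). -/
def Step (G G' : MG) : Prop := DeltaYYStep G G' ∨ YYDeltaStep G G'

/-- Δ-YY equivalence: `G` can be transformed into `H`, up to isomorphism, by a
finite sequence of Δ-YY operations. -/
def DYYEquiv : MG → MG → Prop :=
  Relation.EqvGen (fun G G' => Step G G' ∨ Iso G G')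

/-- The Δ-YY equivalence class of `G` contains only finitely many isomorphism
classes of multigraphs. -/
def FiniteClass (G : MG) : Prop :=
  ∃ S : Finset MG, ∀ H : MG, DYYEquiv G H → ∃ H' ∈ S, Iso H H'

/-- Connectivity: nonempty, and any two vertices are joined by a path. -/
def Connected (G : MG) : Prop :=
  Nonempty G.V ∧ ∀ u v : G.V, Relation.ReflTransGen G.Adj u v

/-- The multigraph obtained by deleting a set of vertices (and all edges
incident to them). -/
def deleteVerts (G : MG) (S : Set G.V) : MG where
  V := {y : G.V // y ∉ S}
  fin := by haveI := G.fin; infer_instance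
  mult a b := G.mult a.1 b.1
  symm := fun a b => G.symm a.1 b.1
  loopless := fun a => G.loopless a.1

/-- `G` is `k`-connected: it has more than `k` vertices and deleting any set of
fewer than `k` vertices leaves a connected multigraph. -/
def KConnected (G : MG) (k : ℕ) : Prop :=
  k < G.order ∧ ∀ S : Set G.V, S.ncard < k → (G.deleteVerts S).Connected

/-- `G` is planar: it has a drawing in the plane in which vertices are distinct
points, every edge (each parallel edge separately) is a continuous injective
arc joining the points of its endpoints, no arc passes through a vertex point
in its interior, and the interiors of the arcs of distinct edges are disjoint.
The arc of the `k`-th edge from `v` to `u` is the reverse of the arc of the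
`k`-th edge from `u` to `v` (they are the same edge drawn once). -/
def IsPlanar (G : MG) : Prop :=
  ∃ (pos : G.V → ℝ × ℝ) (γ : G.V → G.V → ℕ → C(unitInterval, ℝ × ℝ)),
    Function.Injective pos ∧
    (∀ u v k, k < G.mult u v →
      γ u v k 0 = pos u ∧ γ u v k 1 = pos v ∧ Function.Injective (γ u v k)) ∧
    (∀ u v k (t : unitInterval), γ v u k t = γ u v k (unitInterval.symm t)) ∧
    (∀ u v k, k < G.mult u v → ∀ t : unitInterval, t ≠ 0 → t ≠ 1 →
      ∀ z : G.V, γ u v k t ≠ pos z) ∧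
    (∀ u v k u' v' k', k < G.mult u v → k' < G.mult u' v' →
      (s(u, v) ≠ s(u', v') ∨ k ≠ k') →
      ∀ t t' : unitInterval, t ≠ 0 → t ≠ 1 → t' ≠ 0 → t' ≠ 1 →
        γ u v k t ≠ γ u' v' k' t')

/-- An independent set: no two of its vertices are adjacent. -/
def IsIndepSet (G : MG) (S : Set G.V) : Prop :=
  ∀ u ∈ S, ∀ v ∈ S, ¬ G.Adj u v

/-- The independence number `α(G)`: the maximum size of an independent set. -/
def indepNum (G : MG) : ℕ :=
  sSup {n | ∃ S : Set G.V, G.IsIndepSet S ∧ S.ncard = n}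

/-- The number of non-empty connections, i.e. the number of edges of the
simplification `G^S`. -/
def numConn (G : MG) : ℕ := {p : Sym2 G.V | G.multS p ≠ 0}.ncard

/-- The cyclomatic number `m - n + 1` of the simplification `G^S` of `G`. -/
def cyclomaticS (G : MG) : ℤ := (G.numConn : ℤ) - (G.order : ℤ) + 1

/-- `AddOnAt G a S` : the vertex set `S` of `G` carries (a subgraph copy of) an
add-on whose addition vertex is `a`.  An add-on of length 0 is a double edge or
a delta; an add-on of length `n ≥ 1` is a 4-cycle `a b c d` with the
connections `ab`, `ad` of size 1 and `bc`, `cd` of size 2, glued at `c` to an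
add-on of length `n - 1`. -/
inductive AddOnAt (G : MG) : G.V → Set G.V → Prop
  | double (a b : G.V) : a ≠ b → 2 ≤ G.mult a b → AddOnAt G a {a, b}
  | delta (a b c : G.V) : a ≠ b → a ≠ c → b ≠ c →
      1 ≤ G.mult a b → 1 ≤ G.mult a c → 1 ≤ G.mult b c → AddOnAt G a {a, b, c}
  | link (a b c d : G.V) (S : Set G.V) :
      a ≠ b → a ≠ c → a ≠ d → b ≠ c → b ≠ d → c ≠ d →
      1 ≤ G.mult a b → 1 ≤ G.mult a d → 2 ≤ G.mult b c → 2 ≤ G.mult c d →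
      AddOnAt G c S → S ∩ {a, b, d} = ∅ → AddOnAt G a ({a, b, d} ∪ S)

/-- `G` contains one of the four families of excluded subgraphs. -/
def HasExcluded (G : MG) : Prop :=
  -- (1) a 3-cycle in which at least one connection has size at least 2
  (∃ a b c : G.V, a ≠ b ∧ a ≠ c ∧ b ≠ c ∧
      2 ≤ G.mult a b ∧ 1 ≤ G.mult a c ∧ 1 ≤ G.mult b c) ∨
  -- (2) a 4-cycle with at least three connections of size at least 2 and an
  -- add-on glued at a vertex incident to two of them
  (∃ a b c d : G.V, ∃ S : Set G.V,
      a ≠ b ∧ a ≠ c ∧ a ≠ d ∧ b ≠ c ∧ b ≠ d ∧ c ≠ d ∧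
      2 ≤ G.mult a b ∧ 2 ≤ G.mult b c ∧ 2 ≤ G.mult c d ∧ 1 ≤ G.mult d a ∧
      AddOnAt G b S ∧ S ∩ {a, c, d} = ∅) ∨
  -- (3) a 5-cycle with all connections of size at least 2 and add-ons glued at
  -- two non-adjacent vertices of the cycle
  (∃ v₀ v₁ v₂ v₃ v₄ : G.V, ∃ S T : Set G.V,
      v₀ ≠ v₁ ∧ v₀ ≠ v₂ ∧ v₀ ≠ v₃ ∧ v₀ ≠ v₄ ∧ v₁ ≠ v₂ ∧ v₁ ≠ v₃ ∧ v₁ ≠ v₄ ∧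
      v₂ ≠ v₃ ∧ v₂ ≠ v₄ ∧ v₃ ≠ v₄ ∧
      2 ≤ G.mult v₀ v₁ ∧ 2 ≤ G.mult v₁ v₂ ∧ 2 ≤ G.mult v₂ v₃ ∧
      2 ≤ G.mult v₃ v₄ ∧ 2 ≤ G.mult v₄ v₀ ∧
      AddOnAt G v₀ S ∧ AddOnAt G v₂ T ∧
      S ∩ {v₁, v₂, v₃, v₄} = ∅ ∧ T ∩ {v₀, v₁, v₃, v₄} = ∅ ∧ S ∩ T = ∅) ∨
  -- (4) a 4-cycle with three connections of size at least 2, whose fourth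
  -- connection has size 1 and lies in a triangle, with add-ons glued at both
  -- vertices of that connection
  (∃ a b c d e : G.V, ∃ S T : Set G.V,
      a ≠ b ∧ a ≠ c ∧ a ≠ d ∧ a ≠ e ∧ b ≠ c ∧ b ≠ d ∧ b ≠ e ∧
      c ≠ d ∧ c ≠ e ∧ d ≠ e ∧
      2 ≤ G.mult a b ∧ 2 ≤ G.mult b c ∧ 2 ≤ G.mult c d ∧ G.mult d a = 1 ∧
      1 ≤ G.mult d e ∧ 1 ≤ G.mult e a ∧
      AddOnAt G a S ∧ AddOnAt G d T ∧
      S ∩ {b, c, d, e} = ∅ ∧ T ∩ {a, b, c, e} = ∅ ∧ S ∩ T = ∅)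

/-- The doubling of a simple graph: every edge is replaced by a connection of
size 2. -/
def doubling {V : Type} [Fintype V] (H : SimpleGraph V) : MG where
  V := V
  fin := inferInstance
  mult u v := if H.Adj u v then 2 else 0
  symm := by
    intro u v
    try dsimp only
    by_cases h : H.Adj u v
    · rw [if_pos h, if_pos h.symm]
    · rw [if_neg h, if_neg fun h' => h h'.symm]
  loopless := fun v => if_neg (H.loopless.irrefl v)

end MG

end

/-!
Call a connection heavy if it has size at least 2 and light if it has size 1, and give a heavy
connection weight 1 and a light one weight 2. A multigraph is tame if all its connections have
size at most 2 and it has no cycle of length at most 5 and weight at most 5: no triangle with a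
heavy connection, no 4-cycle with three consecutive heavy connections, no 5-cycle of heavy
connections. Simple graphs are tame.

In a tame multigraph the connections of a delta are light and the external vertices of a wye are
pairwise non-adjacent. So a Δ-YY transformation replaces three light connections by paths of two
heavy ones through the new vertex, a YY-Δ transformation does the converse, and both preserve
weights: a cycle of weight at most 5 after the operation yields one before it. As the two
transformations undo each other up to isomorphism, tameness is invariant under Δ-YY equivalence.
-/

namespace MG

section Triples

variable {V : Type} {u v w a b : V}

theorem triCount_eq_one (ha : a = u ∨ a = v ∨ a = w) (hb : b = u ∨ b = v ∨ b = w)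
    (hab : a ≠ b) : triCount u v w a b = 1 := by
  unfold triCount
  rw [if_pos]
  rcases ha with rfl | rfl | rfl <;> rcases hb with rfl | rfl | rfl <;>
    simp_all [Sym2.eq_swap]

theorem triCount_eq_zero (h : ¬((a = u ∨ a = v ∨ a = w) ∧ (b = u ∨ b = v ∨ b = w))) :
    triCount u v w a b = 0 := by
  unfold triCount
  rw [if_neg]
  simp only [Set.mem_insert_iff, Set.mem_singleton_iff, Sym2.eq_iff]
  tauto

theorem triCount_map {W : Type} {f : V → W} (hf : Function.Injective f) :
    triCount (f u) (f v) (f w) (f a) (f b) = triCount u v w a b := by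
  simp only [triCount, Set.mem_insert_iff, Set.mem_singleton_iff, Sym2.eq_iff, hf.eq_iff]

theorem exists_ne_of_mem_triple (huv : u ≠ v) (huw : u ≠ w) (hvw : v ≠ w)
    (ha : a = u ∨ a = v ∨ a = w) (hb : b = u ∨ b = v ∨ b = w) :
    ∃ c, (c = u ∨ c = v ∨ c = w) ∧ c ≠ a ∧ c ≠ b := by
  rcases ha with rfl | rfl | rfl <;> rcases hb with rfl | rfl | rfl <;>
    first
      | exact ⟨u, by simp_all [eq_comm]⟩
      | exact ⟨v, by simp_all [eq_comm]⟩
      | exact ⟨w, by simp_all [eq_comm]⟩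

end Triples

def HeavyTriangle (G : MG) : Prop :=
  ∃ a b c : G.V, a ≠ b ∧ a ≠ c ∧ b ≠ c ∧
    2 ≤ G.mult a b ∧ 1 ≤ G.mult b c ∧ 1 ≤ G.mult c a

def HeavyQuadrilateral (G : MG) : Prop :=
  ∃ a b c d : G.V, a ≠ b ∧ a ≠ c ∧ a ≠ d ∧ b ≠ c ∧ b ≠ d ∧ c ≠ d ∧
    2 ≤ G.mult a b ∧ 2 ≤ G.mult b c ∧ 2 ≤ G.mult c d ∧ 1 ≤ G.mult d a

def HeavyPentagon (G : MG) : Prop :=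
  ∃ a b c d e : G.V, a ≠ b ∧ a ≠ c ∧ a ≠ d ∧ a ≠ e ∧ b ≠ c ∧ b ≠ d ∧ b ≠ e ∧
    c ≠ d ∧ c ≠ e ∧ d ≠ e ∧
    2 ≤ G.mult a b ∧ 2 ≤ G.mult b c ∧ 2 ≤ G.mult c d ∧ 2 ≤ G.mult d e ∧
    2 ≤ G.mult e a

structure Tame (G : MG) : Prop where
  mult_le_two : ∀ a b, G.mult a b ≤ 2
  not_heavyTriangle : ¬ G.HeavyTriangle
  not_heavyQuadrilateral : ¬ G.HeavyQuadrilateral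
  not_heavyPentagon : ¬ G.HeavyPentagon

theorem Simple.tame {G : MG} (hG : G.Simple) : G.Tame where
  mult_le_two a b := (hG a b).trans one_le_two
  not_heavyTriangle := fun ⟨a, b, _, _, _, _, h, _⟩ => by have := hG a b; omega
  not_heavyQuadrilateral := fun ⟨a, b, _, _, _, _, _, _, _, _, h, _⟩ => by
    have := hG a b; omega
  not_heavyPentagon := fun ⟨a, b, _, _, _, _, _, _, _, _, _, _, _, _, _, h, _⟩ => by
    have := hG a b; omega

section Comap

variable {G H : MG} {f : H.V → G.V}

theorem HeavyTriangle.map (hf : Function.Injective f)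
    (hm : ∀ a b, H.mult a b ≤ G.mult (f a) (f b)) : H.HeavyTriangle → G.HeavyTriangle :=
  fun ⟨a, b, c, h₁, h₂, h₃, m₁, m₂, m₃⟩ =>
    ⟨f a, f b, f c, hf.ne h₁, hf.ne h₂, hf.ne h₃,
      m₁.trans (hm a b), m₂.trans (hm b c), m₃.trans (hm c a)⟩

theorem HeavyQuadrilateral.map (hf : Function.Injective f)
    (hm : ∀ a b, H.mult a b ≤ G.mult (f a) (f b)) :
    H.HeavyQuadrilateral → G.HeavyQuadrilateral :=
  fun ⟨a, b, c, d, h₁, h₂, h₃, h₄, h₅, h₆, m₁, m₂, m₃, m₄⟩ =>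
    ⟨f a, f b, f c, f d, hf.ne h₁, hf.ne h₂, hf.ne h₃, hf.ne h₄, hf.ne h₅, hf.ne h₆,
      m₁.trans (hm a b), m₂.trans (hm b c), m₃.trans (hm c d), m₄.trans (hm d a)⟩

theorem HeavyPentagon.map (hf : Function.Injective f)
    (hm : ∀ a b, 2 ≤ H.mult a b → 2 ≤ G.mult (f a) (f b)) :
    H.HeavyPentagon → G.HeavyPentagon :=
  fun ⟨a, b, c, d, e, h₁, h₂, h₃, h₄, h₅, h₆, h₇, h₈, h₉, h₁₀, m₁, m₂, m₃, m₄, m₅⟩ =>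
    ⟨f a, f b, f c, f d, f e, hf.ne h₁, hf.ne h₂, hf.ne h₃, hf.ne h₄, hf.ne h₅, hf.ne h₆,
      hf.ne h₇, hf.ne h₈, hf.ne h₉, hf.ne h₁₀, hm a b m₁, hm b c m₂, hm c d m₃, hm d e m₄,
      hm e a m₅⟩

theorem Tame.comap (hG : G.Tame) (hf : Function.Injective f)
    (hm : ∀ a b, H.mult a b ≤ G.mult (f a) (f b)) : H.Tame where
  mult_le_two a b := (hm a b).trans (hG.mult_le_two _ _)
  not_heavyTriangle h := hG.not_heavyTriangle (h.map hf hm)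
  not_heavyQuadrilateral h := hG.not_heavyQuadrilateral (h.map hf hm)
  not_heavyPentagon h := hG.not_heavyPentagon (h.map hf fun a b h => h.trans (hm a b))

end Comap

theorem Iso.tame_iff {G H : MG} (h : Iso G H) : G.Tame ↔ H.Tame := by
  obtain ⟨e, he⟩ := h
  refine ⟨fun hG => hG.comap e.symm.injective fun a b => ?_,
    fun hH => hH.comap e.injective fun a b => (he a b).ge⟩
  rw [← he, e.apply_symm_apply, e.apply_symm_apply]

section Delta

variable {G : MG} {u v w a b : G.V}

theorem IsDelta.one_le_mult (hd : G.IsDelta u v w) (ha : a = u ∨ a = v ∨ a = w)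
    (hb : b = u ∨ b = v ∨ b = w) (hab : a ≠ b) : 1 ≤ G.mult a b := by
  obtain ⟨-, -, -, h₁, h₂, h₃⟩ := hd
  rcases ha with rfl | rfl | rfl <;> rcases hb with rfl | rfl | rfl <;>
    first
      | exact absurd rfl hab
      | assumption
      | (rw [G.symm]; assumption)

theorem IsDelta.triCount_le_mult (hd : G.IsDelta u v w) (hab : a ≠ b) :
    triCount u v w a b ≤ G.mult a b := by
  by_cases h : (a = u ∨ a = v ∨ a = w) ∧ (b = u ∨ b = v ∨ b = w)
  · rw [triCount_eq_one h.1 h.2 hab]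
    exact hd.one_le_mult h.1 h.2 hab
  · rw [triCount_eq_zero h]
    exact Nat.zero_le _

theorem Tame.mult_eq_one_of_isDelta (hG : G.Tame) (hd : G.IsDelta u v w)
    (ha : a = u ∨ a = v ∨ a = w) (hb : b = u ∨ b = v ∨ b = w) (hab : a ≠ b) :
    G.mult a b = 1 := by
  obtain ⟨c, hc, hca, hcb⟩ := exists_ne_of_mem_triple hd.1 hd.2.1 hd.2.2.1 ha hb
  refine le_antisymm (not_lt.1 fun h => hG.not_heavyTriangle ?_) (hd.one_le_mult ha hb hab)
  exact ⟨a, b, c, hab, hca.symm, hcb.symm, h, hd.one_le_mult hb hc hcb.symm,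
    hd.one_le_mult hc ha hca⟩

end Delta

section Wye

variable {G : MG} {x u v w a b : G.V}

theorem IsWye.mult_center (hw : G.IsWye x u v w) (ha : a = u ∨ a = v ∨ a = w) :
    G.mult x a = 2 := by
  obtain ⟨-, -, -, -, -, -, h₁, h₂, h₃, -⟩ := hw
  rcases ha with rfl | rfl | rfl <;> assumption

theorem IsWye.mult_center_eq (hw : G.IsWye x u v w) (a : G.V) :
    G.mult x a = if a = u ∨ a = v ∨ a = w then 2 else 0 := by
  split_ifs with ha
  · exact hw.mult_center ha
  · push Not at ha
    obtain ⟨-, -, -, -, -, -, -, -, -, h⟩ := hw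
    exact h a ha.1 ha.2.1 ha.2.2

theorem IsWye.center_ne (hw : G.IsWye x u v w) (ha : a = u ∨ a = v ∨ a = w) : x ≠ a := by
  obtain ⟨-, -, -, h₁, h₂, h₃, -⟩ := hw
  rcases ha with rfl | rfl | rfl <;> assumption

theorem IsWye.ne_center₁ (hw : G.IsWye x u v w) : u ≠ x := hw.2.2.2.1.symm

theorem IsWye.ne_center₂ (hw : G.IsWye x u v w) : v ≠ x := hw.2.2.2.2.1.symm

theorem IsWye.ne_center₃ (hw : G.IsWye x u v w) : w ≠ x := hw.2.2.2.2.2.1.symm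

theorem Tame.mult_eq_zero_of_isWye (hG : G.Tame) (hw : G.IsWye x u v w)
    (ha : a = u ∨ a = v ∨ a = w) (hb : b = u ∨ b = v ∨ b = w) (hab : a ≠ b) :
    G.mult a b = 0 := by
  by_contra h
  exact hG.not_heavyTriangle ⟨x, a, b, hw.center_ne ha, hw.center_ne hb, hab,
    (hw.mult_center ha).ge, by omega, one_le_two.trans (G.symm b x ▸ hw.mult_center hb).ge⟩

end Wye

section DeltaYY

variable {G : MG} {u v w : G.V}

theorem deltaYY_mult_some_some (a b : G.V) :
    (G.deltaYY u v w).mult (some a) (some b) = G.mult a b - triCount u v w a b := rfl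

theorem deltaYY_mult_none_some (b : G.V) :
    (G.deltaYY u v w).mult none (some b) = if b = u ∨ b = v ∨ b = w then 2 else 0 := rfl

theorem deltaYY_mult_some_none (a : G.V) :
    (G.deltaYY u v w).mult (some a) none = if a = u ∨ a = v ∨ a = w then 2 else 0 := rfl

theorem deltaYY_mult_some_some_le (a b : G.V) :
    (G.deltaYY u v w).mult (some a) (some b) ≤ G.mult a b :=
  Nat.sub_le _ _

theorem deltaYY_mult_some_comm (a b : G.V) :
    (G.deltaYY u v w).mult (some a) (some b) = (G.deltaYY u v w).mult (some b) (some a) :=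
  (G.deltaYY u v w).symm _ _

theorem mem_of_deltaYY_mult_some_none_pos {a : G.V}
    (h : 0 < (G.deltaYY u v w).mult (some a) none) : a = u ∨ a = v ∨ a = w := by
  rw [deltaYY_mult_some_none] at h
  split_ifs at h with ha
  exacts [ha, absurd h (by norm_num)]

theorem mem_of_deltaYY_mult_none_some_pos {b : G.V}
    (h : 0 < (G.deltaYY u v w).mult none (some b)) : b = u ∨ b = v ∨ b = w :=
  mem_of_deltaYY_mult_some_none_pos (((G.deltaYY u v w).symm _ _).trans_ge h)

theorem Tame.deltaYY_detour (hG : G.Tame) (hd : G.IsDelta u v w) {a b : G.V}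
    (ha : 0 < (G.deltaYY u v w).mult (some a) none)
    (hb : 0 < (G.deltaYY u v w).mult none (some b)) (hab : a ≠ b) :
    G.mult a b = 1 ∧ (G.deltaYY u v w).mult (some a) (some b) = 0 := by
  have ha := mem_of_deltaYY_mult_some_none_pos ha
  have hb := mem_of_deltaYY_mult_none_some_pos hb
  have h := hG.mult_eq_one_of_isDelta hd ha hb hab
  rw [deltaYY_mult_some_some, h, triCount_eq_one ha hb hab]
  exact ⟨rfl, rfl⟩

theorem Tame.not_heavyTriangle_deltaYY (hG : G.Tame) (hd : G.IsDelta u v w) :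
    ¬ (G.deltaYY u v w).HeavyTriangle := by
  have le := @deltaYY_mult_some_some_le _ u v w
  have inj {a b : G.V} (h : (some a : (G.deltaYY u v w).V) ≠ some b) : a ≠ b :=
    ne_of_apply_ne some h
  rintro ⟨_ | a, _ | b, _ | c, hab, hac, hbc, m₁, m₂, m₃⟩ <;> try contradiction
  · have := (hG.deltaYY_detour hd m₃ (by omega) (inj hbc).symm).2
    rw [deltaYY_mult_some_comm] at this; omega
  · have := (hG.deltaYY_detour hd (by omega) m₂ (inj hac)).2
    rw [deltaYY_mult_some_comm] at this; omega
  · have := (hG.deltaYY_detour hd m₂ m₃ (inj hab).symm).2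
    rw [deltaYY_mult_some_comm] at this; omega
  · exact hG.not_heavyTriangle ⟨a, b, c, inj hab, inj hac, inj hbc, m₁.trans (le a b),
      m₂.trans (le b c), m₃.trans (le c a)⟩

theorem Tame.not_heavyQuadrilateral_deltaYY (hG : G.Tame) (hd : G.IsDelta u v w) :
    ¬ (G.deltaYY u v w).HeavyQuadrilateral := by
  have le := @deltaYY_mult_some_some_le _ u v w
  have inj {a b : G.V} (h : (some a : (G.deltaYY u v w).V) ≠ some b) : a ≠ b :=
    ne_of_apply_ne some h
  rintro ⟨_ | a, _ | b, _ | c, _ | d, hab, hac, had, hbc, hbd, hcd, m₁, m₂, m₃, m₄⟩ <;>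
    try contradiction
  · have := (hG.deltaYY_detour hd m₄ (by omega) (inj hbd).symm).1
    exact hG.not_heavyTriangle ⟨b, c, d, inj hbc, inj hbd, inj hcd, m₂.trans (le b c),
      one_le_two.trans (m₃.trans (le c d)), by omega⟩
  · have := (hG.deltaYY_detour hd (by omega) (by omega) (inj hac)).1
    exact hG.not_heavyTriangle ⟨c, d, a, inj hcd, (inj hac).symm, (inj had).symm,
      m₃.trans (le c d), m₄.trans (le d a), by omega⟩
  · have := (hG.deltaYY_detour hd (by omega) (by omega) (inj hbd)).1
    exact hG.not_heavyTriangle ⟨a, b, d, inj hab, inj had, inj hbd, m₁.trans (le a b),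
      by omega, m₄.trans (le d a)⟩
  · have := (hG.deltaYY_detour hd (by omega) m₄ (inj hac).symm).1
    exact hG.not_heavyTriangle ⟨a, b, c, inj hab, inj hac, inj hbc, m₁.trans (le a b),
      one_le_two.trans (m₂.trans (le b c)), by omega⟩
  · exact hG.not_heavyQuadrilateral ⟨a, b, c, d, inj hab, inj hac, inj had, inj hbc,
      inj hbd, inj hcd, m₁.trans (le a b), m₂.trans (le b c), m₃.trans (le c d),
      m₄.trans (le d a)⟩

theorem Tame.not_heavyPentagon_deltaYY (hG : G.Tame) (hd : G.IsDelta u v w) :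
    ¬ (G.deltaYY u v w).HeavyPentagon := by
  have le := @deltaYY_mult_some_some_le _ u v w
  have inj {a b : G.V} (h : (some a : (G.deltaYY u v w).V) ≠ some b) : a ≠ b :=
    ne_of_apply_ne some h
  have through_none (b c d e : G.V) (hbc : b ≠ c) (hbd : b ≠ d) (hbe : b ≠ e) (hcd : c ≠ d)
      (hce : c ≠ e) (hde : d ≠ e) (m₁ : 2 ≤ (G.deltaYY u v w).mult none (some b))
      (m₂ : 2 ≤ (G.deltaYY u v w).mult (some b) (some c))
      (m₃ : 2 ≤ (G.deltaYY u v w).mult (some c) (some d))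
      (m₄ : 2 ≤ (G.deltaYY u v w).mult (some d) (some e))
      (m₅ : 2 ≤ (G.deltaYY u v w).mult (some e) none) : False := by
    have := (hG.deltaYY_detour hd (by omega) (by omega) hbe.symm).1
    exact hG.not_heavyQuadrilateral ⟨b, c, d, e, hbc, hbd, hbe, hcd, hce, hde,
      m₂.trans (le b c), m₃.trans (le c d), m₄.trans (le d e), by omega⟩
  rintro ⟨_ | a, _ | b, _ | c, _ | d, _ | e, hab, hac, had, hae, hbc, hbd, hbe, hcd, hce, hde,
    m₁, m₂, m₃, m₄, m₅⟩ <;> try contradiction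
  · exact through_none b c d e (inj hbc) (inj hbd) (inj hbe) (inj hcd) (inj hce) (inj hde)
      m₁ m₂ m₃ m₄ m₅
  · exact through_none c d e a (inj hcd) (inj hce) (inj hac).symm (inj hde) (inj had).symm
      (inj hae).symm m₂ m₃ m₄ m₅ m₁
  · exact through_none d e a b (inj hde) (inj had).symm (inj hbd).symm (inj hae).symm
      (inj hbe).symm (inj hab) m₃ m₄ m₅ m₁ m₂
  · exact through_none e a b c (inj hae).symm (inj hbe).symm (inj hce).symm (inj hab)
      (inj hac) (inj hbc) m₄ m₅ m₁ m₂ m₃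
  · exact through_none a b c d (inj hab) (inj hac) (inj had) (inj hbc) (inj hbd) (inj hcd)
      m₅ m₁ m₂ m₃ m₄
  · exact hG.not_heavyPentagon ⟨a, b, c, d, e, inj hab, inj hac, inj had, inj hae, inj hbc,
      inj hbd, inj hbe, inj hcd, inj hce, inj hde, m₁.trans (le a b), m₂.trans (le b c),
      m₃.trans (le c d), m₄.trans (le d e), m₅.trans (le e a)⟩

theorem Tame.deltaYY (hG : G.Tame) (hd : G.IsDelta u v w) : (G.deltaYY u v w).Tame where
  mult_le_two := by
    rintro (_ | a) (_ | b)
    · exact ((G.deltaYY u v w).loopless none).trans_le (Nat.zero_le 2)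
    · rw [deltaYY_mult_none_some]; split <;> omega
    · rw [deltaYY_mult_some_none]; split <;> omega
    · exact (deltaYY_mult_some_some_le a b).trans (hG.mult_le_two a b)
  not_heavyTriangle := hG.not_heavyTriangle_deltaYY hd
  not_heavyQuadrilateral := hG.not_heavyQuadrilateral_deltaYY hd
  not_heavyPentagon := hG.not_heavyPentagon_deltaYY hd

end DeltaYY

section YYDelta

variable {G : MG} {x u v w : G.V}

theorem yyDelta_mult {a b : (G.yyDelta x u v w).V} (hab : a ≠ b) :
    (G.yyDelta x u v w).mult a b = G.mult a.1 b.1 + triCount u v w a.1 b.1 :=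
  if_neg hab

theorem Tame.yyDelta_mult_eq (hG : G.Tame) (hw : G.IsWye x u v w)
    {a b : (G.yyDelta x u v w).V} (hab : a ≠ b) :
    (G.yyDelta x u v w).mult a b =
      if (a.1 = u ∨ a.1 = v ∨ a.1 = w) ∧ (b.1 = u ∨ b.1 = v ∨ b.1 = w) then 1
      else G.mult a.1 b.1 := by
  have hab' : a.1 ≠ b.1 := Subtype.val_injective.ne hab
  rw [yyDelta_mult hab]
  split_ifs with h
  · rw [hG.mult_eq_zero_of_isWye hw h.1 h.2 hab', triCount_eq_one h.1 h.2 hab']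
  · rw [triCount_eq_zero h, add_zero]

theorem Tame.two_le_mult_of_yyDelta (hG : G.Tame) (hw : G.IsWye x u v w)
    {a b : (G.yyDelta x u v w).V} (h : 2 ≤ (G.yyDelta x u v w).mult a b) :
    2 ≤ G.mult a.1 b.1 := by
  have hab : a ≠ b := by rintro rfl; rw [(G.yyDelta x u v w).loopless] at h; omega
  rw [hG.yyDelta_mult_eq hw hab] at h
  split_ifs at h
  · omega
  · exact h

theorem Tame.one_le_mult_of_yyDelta (hG : G.Tame) (hw : G.IsWye x u v w)
    {a b : (G.yyDelta x u v w).V} (h : 1 ≤ (G.yyDelta x u v w).mult a b) :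
    1 ≤ G.mult a.1 b.1 ∨ (a.1 = u ∨ a.1 = v ∨ a.1 = w) ∧ (b.1 = u ∨ b.1 = v ∨ b.1 = w) := by
  have hab : a ≠ b := by rintro rfl; rw [(G.yyDelta x u v w).loopless] at h; omega
  rw [hG.yyDelta_mult_eq hw hab] at h
  split_ifs at h with hT
  exacts [.inr hT, .inl h]

theorem Tame.not_heavyTriangle_yyDelta (hG : G.Tame) (hw : G.IsWye x u v w) :
    ¬ (G.yyDelta x u v w).HeavyTriangle := by
  rintro ⟨a, b, c, hab, hac, hbc, m₁, m₂, m₃⟩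
  have inj := Subtype.val_injective (p := fun y => y ≠ x)
  replace m₁ := hG.two_le_mult_of_yyDelta hw m₁
  rcases hG.one_le_mult_of_yyDelta hw m₂ with m₂ | ⟨hb, hc⟩ <;>
    rcases hG.one_le_mult_of_yyDelta hw m₃ with m₃ | ⟨hc', ha⟩
  · exact hG.not_heavyTriangle ⟨a.1, b.1, c.1, inj.ne hab, inj.ne hac, inj.ne hbc, m₁, m₂, m₃⟩
  · exact hG.not_heavyQuadrilateral ⟨c.1, x, a.1, b.1, c.2, inj.ne hac.symm, inj.ne hbc.symm,
      a.2.symm, b.2.symm, inj.ne hab,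
      (G.symm x c.1 ▸ hw.mult_center hc').ge, (hw.mult_center ha).ge, m₁, m₂⟩
  · exact hG.not_heavyQuadrilateral ⟨a.1, b.1, x, c.1, inj.ne hab, a.2, inj.ne hac, b.2,
      inj.ne hbc, c.2.symm, m₁, (G.symm x b.1 ▸ hw.mult_center hb).ge,
      (hw.mult_center hc).ge, m₃⟩
  · have := hG.mult_eq_zero_of_isWye hw ha hb (inj.ne hab)
    omega

theorem Tame.not_heavyQuadrilateral_yyDelta (hG : G.Tame) (hw : G.IsWye x u v w) :
    ¬ (G.yyDelta x u v w).HeavyQuadrilateral := by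
  rintro ⟨a, b, c, d, hab, hac, had, hbc, hbd, hcd, m₁, m₂, m₃, m₄⟩
  have inj := Subtype.val_injective (p := fun y => y ≠ x)
  replace m₁ := hG.two_le_mult_of_yyDelta hw m₁
  replace m₂ := hG.two_le_mult_of_yyDelta hw m₂
  replace m₃ := hG.two_le_mult_of_yyDelta hw m₃
  rcases hG.one_le_mult_of_yyDelta hw m₄ with m₄ | ⟨hd, ha⟩
  · exact hG.not_heavyQuadrilateral ⟨a.1, b.1, c.1, d.1, inj.ne hab, inj.ne hac, inj.ne had,
      inj.ne hbc, inj.ne hbd, inj.ne hcd, m₁, m₂, m₃, m₄⟩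
  · exact hG.not_heavyPentagon ⟨a.1, b.1, c.1, d.1, x, inj.ne hab, inj.ne hac, inj.ne had, a.2,
      inj.ne hbc, inj.ne hbd, b.2, inj.ne hcd, c.2, d.2, m₁, m₂, m₃,
      (G.symm x d.1 ▸ hw.mult_center hd).ge, (hw.mult_center ha).ge⟩

theorem Tame.not_heavyPentagon_yyDelta (hG : G.Tame) (hw : G.IsWye x u v w) :
    ¬ (G.yyDelta x u v w).HeavyPentagon := fun h =>
  hG.not_heavyPentagon (h.map Subtype.val_injective fun _ _ => hG.two_le_mult_of_yyDelta hw)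

theorem Tame.yyDelta (hG : G.Tame) (hw : G.IsWye x u v w) : (G.yyDelta x u v w).Tame where
  mult_le_two a b := by
    by_cases hab : a = b
    · rw [hab, (G.yyDelta x u v w).loopless]; omega
    · rw [hG.yyDelta_mult_eq hw hab]; split
      · omega
      · exact hG.mult_le_two _ _
  not_heavyTriangle := hG.not_heavyTriangle_yyDelta hw
  not_heavyQuadrilateral := hG.not_heavyQuadrilateral_yyDelta hw
  not_heavyPentagon := hG.not_heavyPentagon_yyDelta hw

end YYDelta

section Inverse

variable {G : MG} {x u v w : G.V}

theorem IsDelta.isWye_deltaYY (hd : G.IsDelta u v w) :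
    (G.deltaYY u v w).IsWye none (some u) (some v) (some w) := by
  obtain ⟨huv, huw, hvw, -⟩ := hd
  refine ⟨(Option.some_injective _).ne huv, (Option.some_injective _).ne huw,
    (Option.some_injective _).ne hvw, (Option.some_ne_none u).symm,
    (Option.some_ne_none v).symm, (Option.some_ne_none w).symm, if_pos (.inl rfl),
    if_pos (.inr (.inl rfl)), if_pos (.inr (.inr rfl)), ?_⟩
  rintro (_ | y) hu hv hw
  · exact (G.deltaYY u v w).loopless none
  · refine if_neg ?_
    rintro (rfl | rfl | rfl) <;> contradiction

theorem IsDelta.iso_yyDelta_deltaYY (hd : G.IsDelta u v w) :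
    Iso G ((G.deltaYY u v w).yyDelta none (some u) (some v) (some w)) := by
  let e : G.V ≃ {y : Option G.V // y ≠ none} := (Equiv.optionIsSomeEquiv G.V).symm.trans
    (Equiv.subtypeEquivRight fun _ => Option.isSome_iff_ne_none)
  refine ⟨e, fun a b => ?_⟩
  by_cases hab : a = b
  · subst hab
    exact ((MG.yyDelta _ _ _ _ _).loopless _).trans (G.loopless a).symm
  refine (yyDelta_mult (e.injective.ne hab)).trans ?_
  show (G.deltaYY u v w).mult (some a) (some b) +
    triCount (some u) (some v) (some w) (some a) (some b) = _
  rw [deltaYY_mult_some_some, triCount_map (Option.some_injective _),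
    Nat.sub_add_cancel (hd.triCount_le_mult hab)]

theorem IsWye.isDelta_yyDelta (hw : G.IsWye x u v w) :
    (G.yyDelta x u v w).IsDelta ⟨u, hw.ne_center₁⟩ ⟨v, hw.ne_center₂⟩ ⟨w, hw.ne_center₃⟩ := by
  obtain ⟨huv, huw, hvw, -⟩ := hw
  have adj {p q : G.V} (hp : p = u ∨ p = v ∨ p = w) (hq : q = u ∨ q = v ∨ q = w) (hpq : p ≠ q)
      (hp' : p ≠ x) (hq' : q ≠ x) : (G.yyDelta x u v w).Adj ⟨p, hp'⟩ ⟨q, hq'⟩ := by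
    have h : (G.yyDelta x u v w).mult ⟨p, hp'⟩ ⟨q, hq'⟩ = G.mult p q + triCount u v w p q :=
      yyDelta_mult fun h => hpq (Subtype.mk.inj h)
    have := triCount_eq_one hp hq hpq
    show 0 < _
    omega
  exact ⟨fun h => huv (congrArg Subtype.val h), fun h => huw (congrArg Subtype.val h),
    fun h => hvw (congrArg Subtype.val h), adj (.inl rfl) (.inr (.inl rfl)) huv _ _,
    adj (.inl rfl) (.inr (.inr rfl)) huw _ _, adj (.inr (.inl rfl)) (.inr (.inr rfl)) hvw _ _⟩

theorem IsWye.iso_deltaYY_yyDelta (hw : G.IsWye x u v w) :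
    Iso ((G.yyDelta x u v w).deltaYY ⟨u, hw.ne_center₁⟩ ⟨v, hw.ne_center₂⟩ ⟨w, hw.ne_center₃⟩)
      G := by
  have mem_iff (y : {y : G.V // y ≠ x}) :
      (y = ⟨u, hw.ne_center₁⟩ ∨ y = ⟨v, hw.ne_center₂⟩ ∨ y = ⟨w, hw.ne_center₃⟩) ↔
        (y.1 = u ∨ y.1 = v ∨ y.1 = w) := by
    simp only [Subtype.ext_iff]
  refine ⟨Equiv.optionSubtypeNe x, ?_⟩
  rintro (_ | a) (_ | b)
  · exact G.loopless x
  · exact (hw.mult_center_eq b.1).trans (if_congr (mem_iff b).symm rfl rfl)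
  · exact ((G.symm _ _).trans (hw.mult_center_eq a.1)).trans
      (if_congr (mem_iff a).symm rfl rfl)
  · show G.mult a.1 b.1 = (G.yyDelta x u v w).mult a b - triCount _ _ _ a b
    by_cases hab : a = b
    · rw [hab, G.loopless, (G.yyDelta x u v w).loopless, Nat.zero_sub]
    · have h₁ := yyDelta_mult (u := u) (v := v) (w := w) hab
      have h₂ : triCount (V := (G.yyDelta x u v w).V) ⟨u, hw.ne_center₁⟩ ⟨v, hw.ne_center₂⟩
          ⟨w, hw.ne_center₃⟩ a b = triCount u v w a.1 b.1 :=
        (triCount_map Subtype.val_injective).symm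
      omega

theorem Tame.deltaYY_iff (hd : G.IsDelta u v w) :
    (G.deltaYY u v w).Tame ↔ G.Tame :=
  ⟨fun h => hd.iso_yyDelta_deltaYY.tame_iff.2 (h.yyDelta hd.isWye_deltaYY),
    fun hG => hG.deltaYY hd⟩

theorem Tame.yyDelta_iff (hw : G.IsWye x u v w) :
    (G.yyDelta x u v w).Tame ↔ G.Tame :=
  ⟨fun h => hw.iso_deltaYY_yyDelta.tame_iff.1 (h.deltaYY hw.isDelta_yyDelta),
    fun hG => hG.yyDelta hw⟩

end Inverse

theorem DYYEquiv.tame_iff {G H : MG} (h : DYYEquiv G H) : G.Tame ↔ H.Tame := by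
  induction h with
  | rel _ _ h =>
    rcases h with (⟨u, v, w, hd, e⟩ | ⟨x, u, v, w, hw, e⟩) | e
    · exact (Tame.deltaYY_iff hd).symm.trans e.tame_iff
    · exact (Tame.yyDelta_iff hw).symm.trans e.tame_iff
    · exact e.tame_iff
  | refl => exact Iff.rfl
  | symm _ _ _ ih => exact ih.symm
  | trans _ _ _ _ _ ih₁ ih₂ => exact ih₁.trans ih₂

end MG

theorem stmt_19_general (G H : MG) (hs : G.Simple)
    (h : MG.DYYEquiv G H) : ∀ u v : H.V, H.mult u v ≤ 2 :=
  (h.tame_iff.1 hs.tame).mult_le_two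

/-- If `G` is a simple 6-regular graph, then every multigraph in
the Δ-YY equivalence class of `G` has all connections of size at most 2. -/
theorem stmt_19 (G H : MG) (hs : G.Simple) (h6 : G.Regular 6)
    (h : MG.DYYEquiv G H) : ∀ u v : H.V, H.mult u v ≤ 2 :=
  stmt_19_general G H hs h
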